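/- arXiv:0909.0165 — 2 statements merged into one kernel-verified Lean document; each statement's English description precedes it below -/
import Mathlib

section
/- Let x ∈ ℍⁿ and δ ∈ (0,1) with x_{2n+1} > 0 and √(x_{2n+1}) > δ‖x‖. Then for every y in the Korányi ball B(x, δ²‖x‖/(100n)), one has y_{2n+1} ≥ δ²‖x‖²/2. -/
/-!
Put `z = x⁻¹ · y`, so that `y = x · z` and `y_{2n+1} = x_{2n+1} + z_{2n+1} + A(x, z)`.
Both `|z_{2n+1}| ≤ ‖z‖²` and, by Cauchy–Schwarz, `|A(x, z)| ≤ 2 ‖x‖ ‖z‖` are small multiples of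
`δ² ‖x‖²` once `‖z‖ ≤ δ² ‖x‖ / 100`, while the hypothesis on `√(x_{2n+1})` says exactly that
`x_{2n+1} > δ² ‖x‖²`.
-/

open Filter Topology MeasureTheory
open scoped BigOperators ENNReal RealInnerProductSpace

noncomputable section

/-- The Heisenberg group `ℍⁿ`, identified with `ℝ^{2n} × ℝ`; the horizontal part is
`EuclideanSpace ℝ (Fin n ⊕ Fin n)` where index `Sum.inl i` corresponds to coordinate `i`
(`1 ≤ i ≤ n` in the paper) and `Sum.inr i` to coordinate `n + i`. -/
abbrev H (n : ℕ) := EuclideanSpace ℝ (Fin n ⊕ Fin n) × ℝ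

/-- `A(p,q) = -2 ∑ (p_i q_{n+i} - p_{n+i} q_i)`. -/
def A {n : ℕ} (p q : H n) : ℝ :=
  -2 * ∑ i : Fin n, (p.1 (Sum.inl i) * q.1 (Sum.inr i) - p.1 (Sum.inr i) * q.1 (Sum.inl i))

/-- The Heisenberg group operation. -/
def Hmul {n : ℕ} (p q : H n) : H n := (p.1 + q.1, p.2 + q.2 + A p q)

/-- The Heisenberg inverse `p⁻¹ = -p`. -/
def Hinv {n : ℕ} (p : H n) : H n := (-p.1, -p.2)

/-- The dilations `δ_r`. -/
def dil {n : ℕ} (r : ℝ) (p : H n) : H n := (r • p.1, r ^ 2 * p.2)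

/-- The Korányi Kgauge. -/
def Kgauge {n : ℕ} (p : H n) : ℝ := (‖p.1‖ ^ 4 + p.2 ^ 2) ^ ((1 : ℝ) / 4)

/-- The Korányi metric `d(p,q) = ‖p⁻¹·q‖`. -/
def hdist {n : ℕ} (p q : H n) : ℝ := Kgauge (Hmul (Hinv p) q)

/-- Closed balls in the Korányi metric. -/
def Kball {n : ℕ} (p : H n) (r : ℝ) : Set (H n) := {q | hdist p q ≤ r}

lemma Kgauge_nonneg {n : ℕ} (p : H n) : 0 ≤ Kgauge p :=
  Real.rpow_nonneg (by positivity) _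

lemma Kgauge_pow_four {n : ℕ} (p : H n) : Kgauge p ^ 4 = ‖p.1‖ ^ 4 + p.2 ^ 2 := by
  rw [Kgauge, ← Real.rpow_natCast, ← Real.rpow_mul (by positivity)]
  norm_num

lemma norm_fst_le_Kgauge {n : ℕ} (p : H n) : ‖p.1‖ ≤ Kgauge p := by
  refine le_of_pow_le_pow_left₀ four_ne_zero (Kgauge_nonneg p) ?_
  rw [Kgauge_pow_four]
  exact le_add_of_nonneg_right (sq_nonneg _)

lemma abs_snd_le_Kgauge_sq {n : ℕ} (p : H n) : |p.2| ≤ Kgauge p ^ 2 := by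
  refine abs_le_of_sq_le_sq ?_ (by positivity)
  rw [← pow_mul, Kgauge_pow_four]
  exact le_add_of_nonneg_left (by positivity)

def rotate {n : ℕ} (v : EuclideanSpace ℝ (Fin n ⊕ Fin n)) : EuclideanSpace ℝ (Fin n ⊕ Fin n) :=
  WithLp.toLp 2 (Sum.elim (fun i => v (Sum.inr i)) (fun i => -v (Sum.inl i)))

lemma norm_rotate {n : ℕ} (v : EuclideanSpace ℝ (Fin n ⊕ Fin n)) : ‖rotate v‖ = ‖v‖ := by
  simp only [EuclideanSpace.norm_eq, rotate, Fintype.sum_sum_type]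
  simp [add_comm]

lemma A_eq_inner_rotate {n : ℕ} (p q : H n) : A p q = -2 * ⟪p.1, rotate q.1⟫ := by
  simp [A, rotate, PiLp.inner_apply, Fintype.sum_sum_type, Finset.sum_add_distrib, mul_comm,
    sub_eq_add_neg]

lemma abs_A_le {n : ℕ} (p q : H n) : |A p q| ≤ 2 * ‖p.1‖ * ‖q.1‖ := by
  rw [A_eq_inner_rotate, abs_mul, mul_assoc, ← norm_rotate q.1]
  norm_num
  exact abs_real_inner_le_norm _ _

lemma Hmul_Hinv_cancel_left {n : ℕ} (p q : H n) : Hmul p (Hmul (Hinv p) q) = q := by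
  ext i
  · simp [Hmul, Hinv]
  · simp only [Hmul, Hinv, A, PiLp.add_apply, PiLp.neg_apply]
    rw [add_assoc, add_assoc, ← mul_add, ← Finset.sum_add_distrib, Finset.sum_eq_zero, mul_zero]
    · ring
    · intro i _
      ring

lemma sub_le_snd_Hmul {n : ℕ} (p q : H n) :
    p.2 - 2 * Kgauge p * Kgauge q - Kgauge q ^ 2 ≤ (Hmul p q).2 := by
  have hA : 2 * ‖p.1‖ * ‖q.1‖ ≤ 2 * Kgauge p * Kgauge q :=
    mul_le_mul (by linarith [norm_fst_le_Kgauge p]) (norm_fst_le_Kgauge q) (norm_nonneg _)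
      (by linarith [Kgauge_nonneg p])
  have hpq : (Hmul p q).2 = p.2 + q.2 + A p q := rfl
  linarith [neg_abs_le (A p q), neg_abs_le q.2, abs_A_le p q, abs_snd_le_Kgauge_sq q]

lemma div_natCast_mul_le_div {c : ℝ} (hc : 0 ≤ c) (a : ℝ) (ha : 0 < a) (n : ℕ) :
    c / (a * n) ≤ c / a := by
  rcases n.eq_zero_or_pos with rfl | hn
  · simp only [Nat.cast_zero, mul_zero, div_zero]
    positivity
  · exact div_le_div_of_nonneg_left hc ha (le_mul_of_one_le_right ha.le (by exact_mod_cast hn))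

theorem vertical_coordinate_lower_bound_general (n : ℕ) (x : H n) (δ : ℝ)
    (hδ : δ ∈ Set.Ioo (0 : ℝ) 1)
    (hsqrt : δ * Kgauge x < Real.sqrt x.2) :
    ∀ y ∈ Kball x (δ ^ 2 * Kgauge x / (100 * n)), δ ^ 2 * Kgauge x ^ 2 / 2 ≤ y.2 := by
  intro y hy
  obtain ⟨hδ0, hδ1⟩ := hδ
  set K := Kgauge x
  set s := Kgauge (Hmul (Hinv x) y)
  have hK : 0 ≤ K := Kgauge_nonneg x
  have hs : 0 ≤ s := Kgauge_nonneg _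
  have hsK : s ≤ δ ^ 2 * K / 100 :=
    le_trans hy (div_natCast_mul_le_div (by positivity) 100 (by norm_num) n)
  have hx2 : δ ^ 2 * K ^ 2 < x.2 := by
    rw [← mul_pow]; exact (Real.lt_sqrt (by positivity)).1 hsqrt
  have hy2 : x.2 - 2 * K * s - s ^ 2 ≤ y.2 := by
    simpa only [Hmul_Hinv_cancel_left] using sub_le_snd_Hmul x (Hmul (Hinv x) y)
  have hδ2 : δ ^ 2 ≤ 1 := pow_le_one₀ hδ0.le hδ1.le
  calc δ ^ 2 * K ^ 2 / 2 ≤ x.2 - 2 * K * s - s ^ 2 := by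
        nlinarith [mul_le_mul hsK hsK hs (by positivity),
          mul_le_mul_of_nonneg_left hsK (by positivity : (0 : ℝ) ≤ 2 * K),
          mul_le_mul_of_nonneg_right hδ2 (by positivity : (0 : ℝ) ≤ δ ^ 2 * K ^ 2)]
    _ ≤ y.2 := hy2

/-- Lemma 3.5 of the paper: if `x_{2n+1} > 0` and `√(x_{2n+1}) > δ‖x‖`,
then every `y` in the Korányi ball `B(x, δ²‖x‖/(100n))` satisfies `y_{2n+1} ≥ δ²‖x‖²/2`. -/
theorem vertical_coordinate_lower_bound (n : ℕ) (hn : 0 < n) (x : H n) (δ : ℝ)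
    (hδ : δ ∈ Set.Ioo (0 : ℝ) 1) (hx : 0 < x.2)
    (hsqrt : δ * Kgauge x < Real.sqrt x.2) :
    ∀ y ∈ Kball x (δ ^ 2 * Kgauge x / (100 * n)), δ ^ 2 * Kgauge x ^ 2 / 2 ≤ y.2 :=
  vertical_coordinate_lower_bound_general n x δ hδ hsqrt
end
end

section
/- Let c ∈ 𝕋 (i.e. c' = 0), c_{2n+1} ≠ 0, r = d(0,c) = √|c_{2n+1}|, and let (p_i) and r_i → 0⁺ satisfy d(p_i, c) ≥ r, p_i → 0, and δ_{1/r_i}(p_i) → p_*. Then c_{2n+1}·p_{*,2n+1} ≤ 0. -/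
open Filter Topology MeasureTheory
open scoped BigOperators ENNReal RealInnerProductSpace

noncomputable section

lemma continuous_Kgauge {n : ℕ} : Continuous (Kgauge : H n → ℝ) := by
  unfold Kgauge
  exact Continuous.rpow_const (by fun_prop) fun _ => Or.inr (by norm_num)

lemma Kgauge_dil_pow_four {n : ℕ} (s : ℝ) (p : H n) :
    Kgauge (dil s p) ^ 4 = s ^ 4 * Kgauge p ^ 4 := by
  simp only [Kgauge_pow_four, dil, norm_smul, Real.norm_eq_abs]
  rw [mul_pow, pow_abs, abs_of_nonneg (by positivity)]
  ring

lemma A_eq_zero_of_fst_eq_zero {n : ℕ} (p : H n) {c : H n} (hc : c.1 = 0) : A p c = 0 := by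
  simp [A, hc]

lemma hdist_pow_four_of_fst_eq_zero {n : ℕ} (p : H n) {c : H n} (hc : c.1 = 0) :
    hdist p c ^ 4 = ‖p.1‖ ^ 4 + (c.2 - p.2) ^ 2 := by
  rw [hdist, Kgauge_pow_four]
  simp only [Hmul, Hinv, A_eq_zero_of_fst_eq_zero _ hc, hc, add_zero, norm_neg]
  ring

lemma two_mul_snd_le_Kgauge_pow_four {n : ℕ} {p c : H n} (hc : c.1 = 0)
    (h : hdist 0 c ≤ hdist p c) : 2 * c.2 * p.2 ≤ Kgauge p ^ 4 := by
  have h4 : hdist 0 c ^ 4 ≤ hdist p c ^ 4 :=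
    pow_le_pow_left₀ (Kgauge_nonneg _) h 4
  rw [hdist_pow_four_of_fst_eq_zero _ hc, hdist_pow_four_of_fst_eq_zero _ hc] at h4
  rw [Kgauge_pow_four]
  simp only [Prod.fst_zero, Prod.snd_zero, norm_zero] at h4
  nlinarith

lemma snd_mul_dil_le_of_hdist_ge {n : ℕ} {p c : H n} (hc : c.1 = 0)
    (h : hdist 0 c ≤ hdist p c) {ρ : ℝ} (hρ : 0 < ρ) :
    c.2 * (dil (1 / ρ) p).2 ≤ ρ ^ 2 * Kgauge (dil (1 / ρ) p) ^ 4 / 2 := by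
  rw [Kgauge_dil_pow_four, dil]
  calc c.2 * ((1 / ρ) ^ 2 * p.2) = 2 * c.2 * p.2 / (2 * ρ ^ 2) := by field_simp
    _ ≤ Kgauge p ^ 4 / (2 * ρ ^ 2) := by
      gcongr; exact two_mul_snd_le_Kgauge_pow_four hc h
    _ = ρ ^ 2 * ((1 / ρ) ^ 4 * Kgauge p ^ 4) / 2 := by field_simp

theorem boundary_blowup_halfspace_vertical_general (n : ℕ)
    (c : H n) (hc1 : c.1 = 0)
    (r : ℝ) (hcr : hdist 0 c = r)
    (p : ℕ → H n) (hpd : ∀ i, r ≤ hdist (p i) c)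
    (ri : ℕ → ℝ) (hripos : ∀ i, 0 < ri i) (hri : Tendsto ri atTop (𝓝 0))
    (pstar : H n)
    (hconv : Tendsto (fun i => dil (1 / ri i) (p i)) atTop (𝓝 pstar)) :
    c.2 * pstar.2 ≤ 0 := by
  subst hcr
  have hbound : ∀ i, c.2 * (dil (1 / ri i) (p i)).2
      ≤ ri i ^ 2 * Kgauge (dil (1 / ri i) (p i)) ^ 4 / 2 :=
    fun i => snd_mul_dil_le_of_hdist_ge hc1 (hpd i) (hripos i)
  have hlhs : Tendsto (fun i => c.2 * (dil (1 / ri i) (p i)).2) atTop (𝓝 (c.2 * pstar.2)) :=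
    ((continuous_snd.tendsto _).comp hconv).const_mul _
  have hrhs : Tendsto (fun i => ri i ^ 2 * Kgauge (dil (1 / ri i) (p i)) ^ 4 / 2) atTop (𝓝 0) := by
    simpa using ((hri.pow 2).mul (((continuous_Kgauge.tendsto _).comp hconv).pow 4)).div_const 2
  exact le_of_tendsto_of_tendsto' hlhs hrhs hbound

/-- Lemma 3.4, case `c ∈ 𝕋`: for `c` in the center with `c_{2n+1} ≠ 0`
and `r = d(0,c) = √|c_{2n+1}|`, blow-ups of points outside `B(c,r)` converging to `0`
satisfy `c_{2n+1} · p_{*,2n+1} ≤ 0`. -/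
theorem boundary_blowup_halfspace_vertical (n : ℕ)
    (c : H n) (hc1 : c.1 = 0) (hc2 : c.2 ≠ 0)
    (r : ℝ) (hcr : hdist 0 c = r) (hrs : r = Real.sqrt |c.2|)
    (p : ℕ → H n) (hpd : ∀ i, r ≤ hdist (p i) c) (hp0 : Tendsto p atTop (𝓝 0))
    (ri : ℕ → ℝ) (hripos : ∀ i, 0 < ri i) (hri : Tendsto ri atTop (𝓝 0))
    (pstar : H n)
    (hconv : Tendsto (fun i => dil (1 / ri i) (p i)) atTop (𝓝 pstar)) :
    c.2 * pstar.2 ≤ 0 :=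
  boundary_blowup_halfspace_vertical_general n c hc1 r hcr p hpd ri hripos hri pstar hconv
end
end
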